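/- arXiv:1210.6012 — 3 statements merged into one kernel-verified Lean document; each statement's English description precedes it below -/
import Mathlib

section
/- Let r : Fin (n+1) → ℝ, let r' be its restriction to the first n indices, and let 1 ≤ k ≤ n. Then the k-th order statistic of r satisfies r_(k)^{n+1} = r'_(k)^{n} ⊓ (r'_(k-1)^{n} ⊔ r (n+1)), where r'_(0)^{n} is interpreted as −∞ (so for k = 1 the formula reads r_(1)^{n+1} = r'_(1)^{n} ⊓ r(n+1)). -/
/-!
Sorting `r` is the same as sorting `r'` and then inserting `a = r (n+1)` into the sorted list
`l` at its place. In `l.orderedInsert a`, position `0` holds `l₀ ⊓ a`, and position `j + 1` holds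
`l_j` if `a ≤ l_j`, `a` if `l_j < a ≤ l_{j+1}`, and `l_{j+1}` otherwise, i.e. `l_{j+1} ⊓ (l_j ⊔ a)`.
-/

/-- `orderStat f k` is the `k`-th smallest value (0-indexed, ties counted with
multiplicity) of the finite sequence `f`. -/
noncomputable def orderStat {n : ℕ} (f : Fin n → ℝ) (k : Fin n) : ℝ :=
  f (Tuple.sort f k)

namespace List

variable {α : Type*} [LinearOrder α]

theorem getElem_zero_orderedInsert (a : α) {l : List α} (hl : 0 < l.length) :
    (l.orderedInsert (· ≤ ·) a)[0]'(by simp [orderedInsert_length]) = l[0] ⊓ a := by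
  obtain ⟨b, l, rfl⟩ := exists_cons_of_length_pos hl
  by_cases hab : a ≤ b
  · simp [orderedInsert_cons_of_le _ _ hab, hab]
  · simp [orderedInsert_of_not_le _ _ hab, (not_le.1 hab).le]

theorem SortedLE.getElem_succ_orderedInsert {l : List α} (hl : l.SortedLE) (a : α) {j : ℕ}
    (hj : j + 1 < l.length) :
    (l.orderedInsert (· ≤ ·) a)[j + 1]'(by simp [orderedInsert_length]; omega) =
      l[j + 1] ⊓ (l[j] ⊔ a) := by
  induction l generalizing j with
  | nil => simp at hj
  | cons b l ih =>
    by_cases hab : a ≤ b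
    · have hab' : a ≤ (b :: l)[j] :=
        hab.trans (hl.getElem_le_getElem_of_le (hi := by simp) j.zero_le)
      have hmono : (b :: l)[j] ≤ (b :: l)[j + 1] := hl.getElem_le_getElem_of_le j.le_succ
      rw [sup_eq_left.2 hab', inf_eq_right.2 hmono]
      simp only [orderedInsert_cons_of_le _ _ hab, getElem_cons_succ]
    · simp only [orderedInsert_of_not_le _ _ hab]
      rcases j with _ | j
      · have hl0 : 0 < l.length := by simpa using hj
        simpa [sup_eq_right.2 (not_le.1 hab).le] using getElem_zero_orderedInsert a hl0
      · exact ih hl.pairwise.of_cons.sortedLE _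

end List

namespace Tuple

variable {α : Type*} [LinearOrder α]

open List in
theorem ofFn_comp_sort_eq_orderedInsert {n : ℕ} (f : Fin (n + 1) → α) :
    List.ofFn (f ∘ sort f) =
      (List.ofFn (Fin.init f ∘ sort (Fin.init f))).orderedInsert (· ≤ ·) (f (Fin.last n)) := by
  refine List.Perm.eq_of_sortedLE (monotone_sort f).sortedLE_ofFn
    ((monotone_sort _).sortedLE_ofFn.pairwise.orderedInsert _ _).sortedLE ?_
  calc List.ofFn (f ∘ sort f)
      _ ~ List.ofFn f := (sort f).ofFn_comp_perm f
      _ = List.ofFn (Fin.init f) ++ [f (Fin.last n)] := by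
        rw [List.ofFn_succ', List.concat_eq_append]; rfl
      _ ~ f (Fin.last n) :: List.ofFn (Fin.init f) := List.perm_append_singleton _ _
      _ ~ f (Fin.last n) :: List.ofFn (Fin.init f ∘ sort (Fin.init f)) :=
        (((sort _).ofFn_comp_perm _).symm).cons _
      _ ~ _ := (List.perm_orderedInsert _ _ _).symm

end Tuple

theorem orderStat_eq_getElem {n : ℕ} (f : Fin n → ℝ) (k : Fin n) :
    orderStat f k = (List.ofFn (f ∘ Tuple.sort f))[(k : ℕ)]'(by simp) := by
  simp [orderStat]

/-- Appending the element `r (n+1)` (here `r (Fin.last n)`) to the sequence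
`r' = (r 1, …, r n)`, the `k`-th order statistic satisfies
`r_(k)^{n+1} = r'_(k)^{n} ⊓ (r'_(k-1)^{n} ⊔ r_{n+1})`, where for `k = 1` the term
`r'_(0)^{n}` is `-∞`, so the formula reads `r_(1)^{n+1} = r'_(1)^{n} ⊓ r_{n+1}`. -/
theorem stmt2 {n : ℕ} (r : Fin (n + 1) → ℝ) (r' : Fin n → ℝ)
    (hr' : ∀ i : Fin n, r' i = r i.castSucc)
    (k : ℕ) (hk : 1 ≤ k) (hkn : k ≤ n) :
    orderStat r ⟨k - 1, by omega⟩ =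
      orderStat r' ⟨k - 1, by omega⟩ ⊓
        (if h : 2 ≤ k then orderStat r' ⟨k - 2, by omega⟩ ⊔ r (Fin.last n)
         else r (Fin.last n)) := by
  obtain rfl : r' = Fin.init r := funext hr'
  obtain ⟨j, rfl⟩ : ∃ j, k = j + 1 := ⟨k - 1, by omega⟩
  simp only [orderStat_eq_getElem, Tuple.ofFn_comp_sort_eq_orderedInsert r]
  rcases j with _ | j
  · rw [dif_neg (by omega)]
    exact List.getElem_zero_orderedInsert _ _
  · rw [dif_pos (by omega)]
    exact (Tuple.monotone_sort _).sortedLE_ofFn.getElem_succ_orderedInsert _ _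
end

section
/- In the G/G/m queue, the departure times satisfy the explicit recursion D k = (min over all index tuples 1 ≤ j₁ < ⋯ < j_k ≤ k+m−2 of (C_{j₁} ⊔ ⋯ ⊔ C_{j_k})) ⊓ C_{k+m−1}, i.e., the k-th smallest element of {C 1, …, C (k+m−1)} equals the minimum of the k-th smallest element of {C 1, …, C (k+m−2)} and C (k+m−1). -/
/-! The `k`-th smallest of finitely many reals is the least, over `k`-element sets of indices, of
the largest value on the set: every such set reaches a sorted position `≥ k - 1` (pigeonhole), and
the first `k` sorted positions attain it. Hence appending a value `c` turns the `k`-th order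
statistic into `min (old k-th, c)` as soon as `c` dominates the smaller old order statistics. In the
queue this applies to `c = C (k+m-1)`, since `C (k+m-1) > D (k-1)` and `D (k-1)` is the
`(k-1)`-th smallest of `C 1, …, C (k+m-2)`. For `m = 1` the completion times increase, so
`D k = C k`, matching the empty minimum `⊤`. -/

open Finset

section OrderStat

variable {N : ℕ} (f : Fin N → ℝ)

lemma orderStat_mono : Monotone (orderStat f) := Tuple.monotone_sort f

lemma orderStat_symm_sort (i : Fin N) : orderStat f ((Tuple.sort f).symm i) = f i := by
  simp [orderStat]

lemma orderStat_le_sup' {s : Finset (Fin N)} (hs : s.Nonempty) {k : Fin N} (hk : (k : ℕ) < #s) :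
    orderStat f k ≤ s.sup' hs f := by
  obtain ⟨x, hx, hxk⟩ := exists_mem_notMem_of_card_lt_card
    (s := (Iio k).map (Tuple.sort f).toEmbedding) (t := s) (by simpa using hk)
  have hkx : k ≤ (Tuple.sort f).symm x := by
    by_contra! h
    exact hxk (mem_map.2 ⟨_, mem_Iio.2 h, by simp⟩)
  calc orderStat f k ≤ orderStat f ((Tuple.sort f).symm x) := orderStat_mono f hkx
    _ = f x := orderStat_symm_sort f x
    _ ≤ s.sup' hs f := le_sup' f hx

lemma sup'_map_sort_Iic (k : Fin N) :
    ((Iic k).map (Tuple.sort f).toEmbedding).sup' (by simp) f = orderStat f k :=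
  le_antisymm
    (sup'_le _ _ fun x hx => by
      obtain ⟨i, hi, rfl⟩ := mem_map.1 hx
      exact orderStat_mono f (mem_Iic.1 hi))
    (le_sup' f (mem_map_of_mem (Tuple.sort f).toEmbedding (mem_Iic.2 le_rfl)))

lemma inf_sup'_strictMono_eq_orderStat {k : ℕ} (hk : 0 < k) (hkN : k ≤ N) :
    ((univ.filter fun j : Fin k → Fin N => ∀ a b, a < b → j a < j b).inf
      fun j => ((univ.sup' ⟨⟨0, hk⟩, mem_univ _⟩ fun i => f (j i) : ℝ) : WithTop ℝ))
      = orderStat f ⟨k - 1, by omega⟩ := by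
  have sup'_comp (j : Fin k → Fin N) :
      univ.sup' ⟨⟨0, hk⟩, mem_univ _⟩ (fun i => f (j i)) =
        (univ.image j).sup' ⟨j ⟨0, hk⟩, mem_image_of_mem j (mem_univ _)⟩ f :=
    (sup'_image _ _).symm
  apply le_antisymm
  · set s := (Iic (⟨k - 1, by omega⟩ : Fin N)).map (Tuple.sort f).toEmbedding
    have hs : #s = k := by simp [s]; omega
    have hmem : ⇑(s.orderEmbOfFin hs) ∈
        univ.filter fun j : Fin k → Fin N => ∀ a b, a < b → j a < j b :=
      mem_filter.2 ⟨mem_univ _, fun a b h => (s.orderEmbOfFin hs).strictMono h⟩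
    refine (Finset.inf_le hmem).trans ?_
    rw [WithTop.coe_le_coe, sup'_comp]
    simp only [image_orderEmbOfFin_univ]
    exact (sup'_map_sort_Iic f _).le
  · refine Finset.le_inf fun j hj => WithTop.coe_le_coe.2 ?_
    have hj : StrictMono j := fun a b h => (mem_filter.1 hj).2 a b h
    rw [sup'_comp]
    exact orderStat_le_sup' f _ (by rw [card_image_of_injective _ hj.injective]; simp; omega)

end OrderStat

lemma filter_strictMono_eq_empty {k N : ℕ} (h : N < k) :
    (univ.filter fun j : Fin k → Fin N => ∀ a b, a < b → j a < j b) = ∅ :=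
  filter_eq_empty_iff.2 fun j _ hj => by
    have := Fintype.card_le_of_injective j (StrictMono.injective fun a b h => hj a b h)
    simp only [Fintype.card_fin] at this
    omega

lemma orderStat_castSucc {n : ℕ} (f : Fin (n + 1) → ℝ) (k : Fin n)
    (h : ∀ i < k, orderStat (Fin.init f) i ≤ f (Fin.last n)) :
    orderStat f k.castSucc = orderStat (Fin.init f) k ⊓ f (Fin.last n) := by
  apply le_antisymm
  · apply le_inf
    · set s := (Iic k).map (Tuple.sort (Fin.init f)).toEmbedding
      calc orderStat f k.castSucc ≤ (s.map Fin.castSuccEmb).sup' (by simp [s]) f :=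
            orderStat_le_sup' f _ (by simp [s])
        _ = orderStat (Fin.init f) k := by
          rw [sup'_map]
          exact sup'_map_sort_Iic (Fin.init f) k
    · set s := (Iio k).map ((Tuple.sort (Fin.init f)).toEmbedding.trans Fin.castSuccEmb)
      have hlast : Fin.last n ∉ s := by simp [s, Fin.castSucc_ne_last]
      calc orderStat f k.castSucc ≤ (cons (Fin.last n) s hlast).sup' (cons_nonempty _) f :=
            orderStat_le_sup' f _ (by simp [s])
        _ ≤ f (Fin.last n) := sup'_le _ _ fun x hx => by
          obtain rfl | hx := mem_cons.1 hx
          · exact le_rfl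
          obtain ⟨i, hi, rfl⟩ := mem_map.1 hx
          exact h i (mem_Iio.1 hi)
  · rw [← sup'_map_sort_Iic f k.castSucc]
    by_cases hlast : Fin.last n ∈ (Iic k.castSucc).map (Tuple.sort f).toEmbedding
    · exact inf_le_right.trans (le_sup' f hlast)
    · have hsub : (Iic k.castSucc).map (Tuple.sort f).toEmbedding ⊆ univ.map Fin.castSuccEmb :=
        fun x hx => by
          obtain ⟨y, rfl⟩ := Fin.exists_castSucc_eq.2 (ne_of_mem_of_not_mem hx hlast)
          exact mem_map_of_mem _ (mem_univ y)
      obtain ⟨u, -, hu⟩ := subset_map_iff.1 hsub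
      have hcard : #u = k + 1 := by simpa using (congrArg card hu).symm
      refine inf_le_left.trans ?_
      simp only [hu, sup'_map]
      exact orderStat_le_sup' _ _ (by omega)

lemma orderStat_congr_length (c : ℕ → ℝ) {a b k : ℕ} (h : a = b) (ha : k < a) :
    orderStat (fun i : Fin a => c i) ⟨k, ha⟩ =
      orderStat (fun i : Fin b => c i) ⟨k, h ▸ ha⟩ := by
  subst h
  rfl

lemma apply_le_orderStat_last {n : ℕ} (f : Fin (n + 1) → ℝ) (i : Fin (n + 1)) :
    f i ≤ orderStat f (Fin.last n) :=
  (orderStat_symm_sort f i).symm.trans_le (orderStat_mono f (Fin.le_last _))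

lemma orderStat_prefix_succ (c : ℕ → ℝ) {n k : ℕ} (hk : k < n)
    (h : ∀ i (hi : i < k), orderStat (fun j : Fin n => c j) ⟨i, hi.trans hk⟩ ≤ c n) :
    orderStat (fun j : Fin (n + 1) => c j) ⟨k, by omega⟩ =
      orderStat (fun j : Fin n => c j) ⟨k, hk⟩ ⊓ c n :=
  orderStat_castSucc (fun j : Fin (n + 1) => c j) ⟨k, hk⟩ fun i hi => h i hi

section Queue

variable {m : ℕ} {C D : ℕ → ℝ}

theorem departure_eq_orderStat_inf (hm : 2 ≤ m) (hCD : ∀ l, 1 ≤ l → D (l - m) < C l)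
    (hD : ∀ k (hk : 1 ≤ k),
      D k = orderStat (fun i : Fin (k + m - 1) => C (i.1 + 1)) ⟨k - 1, by omega⟩)
    {k : ℕ} (hk : 1 ≤ k) :
    D k = orderStat (fun i : Fin (k + m - 2) => C (i.1 + 1)) ⟨k - 1, by omega⟩
      ⊓ C (k + m - 1) := by
  rw [hD k hk,
    orderStat_congr_length (fun n => C (n + 1)) (show k + m - 1 = k + m - 2 + 1 by omega),
    orderStat_prefix_succ (fun n => C (n + 1)) (by omega), show k + m - 2 + 1 = k + m - 1 by omega]
  intro i hi
  calc orderStat (fun j : Fin (k + m - 2) => C (j + 1)) ⟨i, _⟩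
      ≤ orderStat (fun j : Fin (k + m - 2) => C (j + 1)) ⟨k - 1 - 1, by omega⟩ :=
        orderStat_mono _ (Fin.mk_le_mk.2 (by omega))
    _ = D (k - 1) := by
        rw [hD (k - 1) (by omega), orderStat_congr_length (fun n => C (n + 1))
          (show k - 1 + m - 1 = k + m - 2 by omega)]
    _ ≤ C (k + m - 2 + 1) := by
        rw [show k + m - 2 + 1 = k + m - 1 by omega]
        simpa [show k + m - 1 - m = k - 1 by omega] using (hCD (k + m - 1) (by omega)).le

theorem departure_eq_completion_of_one_server (hCD : ∀ l, 1 ≤ l → D (l - 1) < C l)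
    (hD : ∀ k (hk : 1 ≤ k),
      D k = orderStat (fun i : Fin (k + 1 - 1) => C (i.1 + 1)) ⟨k - 1, by omega⟩)
    {k : ℕ} (hk : 1 ≤ k) : D k = C k := by
  have le_departure : ∀ l, 1 ≤ l → ∀ i, 1 ≤ i → i ≤ l → C i ≤ D l := by
    intro l hl i hi hil
    rw [hD l hl, orderStat_congr_length (fun n => C (n + 1)) (show l + 1 - 1 = l - 1 + 1 by omega)]
    have := apply_le_orderStat_last (fun j : Fin (l - 1 + 1) => C (j + 1)) ⟨i - 1, by omega⟩
    simp only [Nat.sub_add_cancel hi] at this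
    exact this
  have le_completion : ∀ i, 1 ≤ i → i ≤ k → C i ≤ C k := by
    intro i hi hik
    obtain rfl | hik := hik.eq_or_lt
    · exact le_rfl
    · exact (le_departure (k - 1) (by omega) i hi (by omega)).trans (hCD k hk).le
  refine le_antisymm ?_ (le_departure k hk k hk le_rfl)
  rw [hD k hk]
  exact le_completion _ (by omega) (Nat.succ_le_of_lt (Tuple.sort _ _).isLt)

end Queue

/-- In the `G/G/m` queue, the departure times satisfy the explicit recursion
`D k = (⋀_{1 ≤ j₁ < ⋯ < j_k ≤ k+m-2} (C j₁ ⊔ ⋯ ⊔ C j_k)) ⊓ C (k+m-1)` (the empty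
minimum, occurring when `m = 1`, being `⊤` in `WithTop ℝ`); that is, the `k`-th
smallest element of `{C 1, …, C (k+m-1)}` equals the minimum of the `k`-th
smallest element of `{C 1, …, C (k+m-2)}` and `C (k+m-1)`. -/
theorem stmt5 (m : ℕ) (hm : 1 ≤ m) (τ A C D : ℕ → ℝ)
    (hτ : ∀ k, 1 ≤ k → 0 < τ k)
    (hC : ∀ k, 1 ≤ k → C k = (A k ⊔ D (k - m)) + τ k)
    (hD : ∀ k (hk : 1 ≤ k),
      D k = orderStat (fun i : Fin (k + m - 1) => C (i.1 + 1)) ⟨k - 1, by omega⟩) :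
    (∀ k (hk : 1 ≤ k),
      (D k : WithTop ℝ) =
        ((Finset.univ.filter
            (fun j : Fin k → Fin (k + m - 2) => ∀ a b : Fin k, a < b → j a < j b)).inf
          (fun j => ((Finset.univ.sup' ⟨⟨0, by omega⟩, Finset.mem_univ _⟩
            (fun i => C ((j i).1 + 1)) : ℝ) : WithTop ℝ)))
        ⊓ (C (k + m - 1) : WithTop ℝ))
    ∧ (∀ k (hk : 1 ≤ k) (hm2 : 2 ≤ m),
      D k = orderStat (fun i : Fin (k + m - 2) => C (i.1 + 1)) ⟨k - 1, by omega⟩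
              ⊓ C (k + m - 1)) := by
  have hCD : ∀ l, 1 ≤ l → D (l - m) < C l := fun l hl => by
    rw [hC l hl]
    linarith [le_max_right (A l) (D (l - m)), hτ l hl]
  refine ⟨fun k hk => ?_, fun k hk hm2 => departure_eq_orderStat_inf hm2 hCD hD hk⟩
  obtain rfl | hm2 := hm.eq_or_lt
  · rw [filter_strictMono_eq_empty (by omega), inf_empty, top_inf_eq,
      departure_eq_completion_of_one_server hCD hD hk, Nat.add_sub_cancel]
  · rw [departure_eq_orderStat_inf hm2 hCD hD hk, WithTop.coe_inf,
      inf_sup'_strictMono_eq_orderStat (fun i => C (i.1 + 1)) hk (by omega)]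
end

section
/- For the G/G/2 queue, the departure times satisfy D k = (C 1 ⊔ C 2 ⊔ ⋯ ⊔ C k) ⊓ C (k+1) for all k ≥ 1. -/
/-!
Write `N x` for the number of customers among `1, …, k + 1` completed by time `x`. As an order
statistic, `D k ≤ x` iff `k ≤ N x`. Customer `k + 1` cannot complete before the departure
`D (k - 1)`, by which time `k - 1` of the first `k` customers have left; so at most one of
`C 1, …, C k` exceeds `C (k + 1)`. With that, `k ≤ N x` holds exactly when all of
`C 1, …, C k` are `≤ x` or `C (k + 1) ≤ x`, i.e. when `(C 1 ⊔ ⋯ ⊔ C k) ⊓ C (k + 1) ≤ x`.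
-/

open Finset

theorem Monotone.le_iff_card_filter_le {α : Type*} [LinearOrder α] {n : ℕ} {g : Fin n → α}
    (hg : Monotone g) (k : Fin n) (x : α) : g k ≤ x ↔ (k : ℕ) + 1 ≤ #{i | g i ≤ x} := by
  constructor
  · intro hk
    calc (k : ℕ) + 1 = #(Iic k) := (Fin.card_Iic k).symm
      _ ≤ #{i | g i ≤ x} := card_le_card fun i hi =>
          mem_filter.2 ⟨mem_univ i, (hg (mem_Iic.1 hi)).trans hk⟩
  · contrapose!
    intro hk
    calc #{i | g i ≤ x} ≤ #(Iio k) := card_le_card fun i hi => mem_Iio.2 <|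
          lt_of_not_ge fun hki => (hk.trans_le (hg hki)).not_ge (mem_filter.1 hi).2
      _ < (k : ℕ) + 1 := by rw [Fin.card_Iio]; omega

theorem orderStat_le_iff {n : ℕ} (f : Fin n → ℝ) (k : Fin n) (x : ℝ) :
    orderStat f k ≤ x ↔ (k : ℕ) + 1 ≤ #{i | f i ≤ x} := by
  rw [orderStat, ← card_equiv (Tuple.sort f) (s := {i | f (Tuple.sort f i) ≤ x}) (by simp)]
  exact (Tuple.monotone_sort f).le_iff_card_filter_le k x

theorem card_filter_fin_succ (p : ℕ → Prop) [DecidablePred p] (n : ℕ) :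
    #{i : Fin n | p (i + 1)} = #{i ∈ Icc 1 n | p i} := by
  refine card_bij (fun i _ => i.1 + 1) (fun i hi => ?_) (fun i _ j _ h => Fin.ext (by omega))
    (fun j hj => ?_)
  · simp only [mem_filter, mem_univ, true_and, mem_Icc] at hi ⊢
    exact ⟨⟨by omega, by omega⟩, hi⟩
  · simp only [mem_filter, mem_Icc] at hj
    obtain ⟨⟨hj1, hjn⟩, hpj⟩ := hj
    obtain ⟨i, rfl⟩ := Nat.exists_eq_add_of_le' hj1
    exact ⟨⟨i, by omega⟩, by simpa using hpj, rfl⟩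

theorem sup'_inf_le_iff_card_filter_le {ι α : Type*} [LinearOrder α] [DecidableEq ι]
    {s : Finset ι} (hs : s.Nonempty) {f : ι → α} {a : ι} (ha : a ∉ s)
    (h : #s ≤ #{i ∈ s | f i ≤ f a} + 1) (x : α) :
    s.sup' hs f ⊓ f a ≤ x ↔ #s ≤ #{i ∈ insert a s | f i ≤ x} := by
  have hsup : s.sup' hs f ≤ x ↔ #s ≤ #{i ∈ s | f i ≤ x} := by
    rw [sup'_le_iff, ← card_filter_eq_iff, le_antisymm_iff, and_iff_right (card_filter_le _ _)]
  rw [inf_le_iff, hsup, filter_insert]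
  by_cases hax : f a ≤ x
  · have hmono : #{i ∈ s | f i ≤ f a} ≤ #{i ∈ s | f i ≤ x} :=
      card_le_card fun i hi => by
        simp only [mem_filter] at hi ⊢
        exact ⟨hi.1, hi.2.trans hax⟩
    rw [if_pos hax, card_insert_of_notMem fun h => ha (mem_filter.1 h).1]
    simp only [hax, or_true, true_iff]
    omega
  · simp [hax]

section Queue

variable {τ A C D : ℕ → ℝ}

theorem departure_le_iff
    (hD : ∀ k, 1 ≤ k →
      D k = orderStat (fun i : Fin (k + 1) => C (i.1 + 1)) ⟨k - 1, Nat.sub_lt_succ k 1⟩)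
    {k : ℕ} (hk : 1 ≤ k) (x : ℝ) :
    D k ≤ x ↔ k ≤ #{i ∈ Icc 1 (k + 1) | C i ≤ x} := by
  rw [hD k hk, orderStat_le_iff, card_filter_fin_succ (C · ≤ x), Fin.val_mk]
  omega

theorem le_card_filter_le_completion_succ_add_one (hτ : ∀ k, 1 ≤ k → 0 < τ k)
    (hC : ∀ k, 1 ≤ k → C k = (A k ⊔ D (k - 2)) + τ k)
    (hD : ∀ k, 1 ≤ k →
      D k = orderStat (fun i : Fin (k + 1) => C (i.1 + 1)) ⟨k - 1, Nat.sub_lt_succ k 1⟩)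
    (k : ℕ) : k ≤ #{i ∈ Icc 1 k | C i ≤ C (k + 1)} + 1 := by
  obtain hk | ⟨j, hj, rfl⟩ : k ≤ 1 ∨ ∃ j, 1 ≤ j ∧ k = j + 1 :=
    (le_or_gt k 1).imp_right fun hk => ⟨k - 1, by omega, by omega⟩
  · omega
  have hDj : D j ≤ C (j + 1 + 1) := by
    rw [hC _ (by omega), show j + 1 + 1 - 2 = j by omega]
    exact le_add_of_le_of_nonneg le_sup_right (hτ _ (by omega)).le
  have := (departure_le_iff hD hj _).1 hDj
  omega

end Queue

/-- For the `G/G/2` queue, the departure times satisfy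
`D k = (C 1 ⊔ ⋯ ⊔ C k) ⊓ C (k+1)` for all `k ≥ 1`. -/
theorem stmt7 (τ A C D : ℕ → ℝ)
    (hτ : ∀ k, 1 ≤ k → 0 < τ k)
    (hC : ∀ k, 1 ≤ k → C k = (A k ⊔ D (k - 2)) + τ k)
    (hD : ∀ k (hk : 1 ≤ k),
      D k = orderStat (fun i : Fin (k + 1) => C (i.1 + 1)) ⟨k - 1, by omega⟩) :
    ∀ k (hk : 1 ≤ k),
      D k = (Finset.Icc 1 k).sup' (Finset.nonempty_Icc.mpr hk) C ⊓ C (k + 1) := by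
  intro k hk
  have hcompl := le_card_filter_le_completion_succ_add_one hτ hC hD k
  refine eq_of_forall_ge_iff fun x => ?_
  rw [departure_le_iff hD hk, sup'_inf_le_iff_card_filter_le _ (by simp) (by simpa using hcompl),
    insert_Icc_right_eq_Icc_add_one (by omega), Nat.card_Icc, Nat.add_sub_cancel]
end
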